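/- For every δ > 0 there exist constants X > 0 (depending only on C, D, ε, δ) and Y > 0 (depending only on C, D, ε) such that the following holds. If |α_P^{0,2}|, |α_P^{1,1}|, |α_P^{2,0}|, |β_P^{0,2}|, |β_P^{1,1}| are all at most X, then for every n ∈ [p, P] each of |α_n^{0,2}|, |α_n^{1,1}|, |α_n^{2,0}|, |β_n^{0,2}|, |β_n^{1,1}| is at most Y·X·max_{n ≤ s ≤ t ≤ P} { (|b_{t,s}|^{2−ε}/|a_{t,s}|)·|a_{s,n}|^{1−ε} } · max{δ, D^{ε(P−n)/2}}. -/

import Mathlib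

open Finset

noncomputable section

/-- `absProd a s t = |a_{t,s}| = |a_{t-1}| ⋯ |a_s|`. -/
def absProd (a : ℕ → ℂ) (s t : ℕ) : ℝ :=
  ∏ i ∈ Finset.Ico s t, ‖a i‖

/-- The term `(|b_{t,s}|^{2-ε}/|a_{t,s}|)·|a_{s,n}|^{1-ε}`. -/
def maxTerm (a b : ℕ → ℂ) (ε : ℝ) (n s t : ℕ) : ℝ :=
  absProd b s t ^ (2 - ε) / absProd a s t * absProd a n s ^ (1 - ε)

/-!
Each coefficient solves a backward recursion `g m = c m * g (m + 1) + (forcing)` whose multiplier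
is `b²/a`, `b` or `a`, and whose forcing involves only coefficients of the earlier kinds.
Unwinding, a coefficient at `n` is controlled by products along paths from `n` made of an
`a`-stretch, a `b`-stretch and a `b²/a`-stretch. Each such product is at most `D^(ε(v-n))·B`:
a path without `b`-stretch loses a factor `D^ε` per step against `maxTerm`, and a general path is
the geometric mean of two of those. Rather than expanding the sums, weights admissible for the
paths from `m` are pushed backward one step at a time, so that each recursion contributes a
geometric series in `μ = D^(ε/2)`: the terminal values give `X·μ^(P-n)` and the inhomogeneities a
constant, which `X = 1/δ` turns into a multiple of `X·δ`.
-/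

def quotProd (a b : ℕ → ℂ) (s t : ℕ) : ℝ :=
  absProd b s t ^ 2 / absProd a s t

def Pinched (C D : ℝ) (a b : ℕ → ℂ) (n P : ℕ) : Prop :=
  ∀ i, n ≤ i → i < P → C ≤ ‖a i‖ ∧ ‖a i‖ ≤ D ∧ C ≤ ‖b i‖ ∧ ‖b i‖ ≤ D

section Products

variable {a b : ℕ → ℂ} {s t u : ℕ}

lemma absProd_nonneg : 0 ≤ absProd a s t :=
  prod_nonneg fun _ _ => norm_nonneg _

@[simp] lemma absProd_self : absProd a s s = 1 := by
  simp [absProd]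

lemma absProd_mul_absProd (hst : s ≤ t) (htu : t ≤ u) :
    absProd a s t * absProd a t u = absProd a s u :=
  prod_Ico_consecutive _ hst htu

lemma absProd_eq_mul_succ (hst : s < t) : absProd a s t = ‖a s‖ * absProd a (s + 1) t :=
  prod_eq_prod_Ico_succ_bot hst _

lemma quotProd_nonneg : 0 ≤ quotProd a b s t :=
  div_nonneg (pow_nonneg absProd_nonneg 2) absProd_nonneg

@[simp] lemma quotProd_self : quotProd a b s s = 1 := by
  simp [quotProd]

lemma quotProd_mul_quotProd (hst : s ≤ t) (htu : t ≤ u) :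
    quotProd a b s t * quotProd a b t u = quotProd a b s u := by
  rw [quotProd, quotProd, quotProd, ← mul_div_mul_comm, ← mul_pow,
    absProd_mul_absProd hst htu, absProd_mul_absProd hst htu]

lemma quotProd_eq_mul_succ (hst : s < t) :
    quotProd a b s t = ‖b s‖ ^ 2 / ‖a s‖ * quotProd a b (s + 1) t := by
  rw [quotProd, quotProd, absProd_eq_mul_succ hst, absProd_eq_mul_succ hst, mul_pow,
    mul_div_mul_comm]

lemma quotProd_eq_prod : quotProd a b s t = ∏ i ∈ Ico s t, ‖b i‖ ^ 2 / ‖a i‖ := by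
  rw [quotProd, absProd, absProd, prod_div_distrib, prod_pow]

end Products

lemma prod_le_pow_card_mul_prod {ι : Type*} {s : Finset ι} {f g : ι → ℝ} {c : ℝ}
    (hf : ∀ i ∈ s, 0 ≤ f i) (hfg : ∀ i ∈ s, f i ≤ c * g i) :
    ∏ i ∈ s, f i ≤ c ^ s.card * ∏ i ∈ s, g i :=
  (prod_le_prod hf hfg).trans_eq (by rw [prod_mul_distrib, prod_const])

lemma rpow_le_rpow_mul_rpow_sub {x D ε : ℝ} (hx : 0 < x) (hxD : x ≤ D) (hε : 0 ≤ ε) (r : ℝ) :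
    x ^ r ≤ D ^ ε * x ^ (r - ε) := by
  calc x ^ r = x ^ ε * x ^ (r - ε) := by rw [← Real.rpow_add hx, add_sub_cancel]
    _ ≤ D ^ ε * x ^ (r - ε) := by gcongr

section PathBound

variable {C D ε B : ℝ} {a b : ℕ → ℂ} {n P : ℕ}

lemma Pinched.pos (hC : 0 < C) (hab : Pinched C D a b n P) {i : ℕ} (hni : n ≤ i) (hiP : i < P) :
    0 < ‖a i‖ ∧ 0 < ‖b i‖ :=
  have h := hab i hni hiP
  ⟨hC.trans_le h.1, hC.trans_le h.2.2.1⟩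

lemma Pinched.sq_div_le_sq_div (hC : 0 < C) (hab : Pinched C D a b n P) :
    ∀ m, n ≤ m → m < P → C ^ 2 / D ≤ ‖b m‖ ^ 2 / ‖a m‖ := fun m hnm hmP =>
  div_le_div₀ (by positivity) (pow_le_pow_left₀ hC.le (hab m hnm hmP).2.2.1 2)
    (hab.pos hC hnm hmP).1 (hab m hnm hmP).2.1

lemma Pinched.sq_div_le_norm (hC : 0 < C) (hab : Pinched C D a b n P) :
    ∀ m, n ≤ m → m < P → C ^ 2 / D ≤ ‖b m‖ := by
  intro m hnm hmP
  obtain ⟨hCa, haD, hCb, -⟩ := hab m hnm hmP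
  rw [div_le_iff₀ (hC.trans_le (hCa.trans haD)), sq]
  nlinarith

lemma absProd_le_pow_mul_rpow (hC : 0 < C) (hε : 0 ≤ ε) (hab : Pinched C D a b n P)
    {s : ℕ} (hsP : s ≤ P) :
    absProd a n s ≤ (D ^ ε) ^ (s - n) * absProd a n s ^ (1 - ε) := by
  rw [absProd, ← Nat.card_Ico, ← Real.finsetProd_rpow _ _ fun _ _ => norm_nonneg _]
  refine prod_le_pow_card_mul_prod (fun _ _ => norm_nonneg _) fun i hi => ?_
  obtain ⟨hni, his⟩ := mem_Ico.1 hi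
  simpa using rpow_le_rpow_mul_rpow_sub ((hab.pos hC hni (his.trans_le hsP)).1)
    (hab i hni (his.trans_le hsP)).2.1 hε 1

lemma quotProd_le_pow_mul_rpow (hC : 0 < C) (hε : 0 ≤ ε) (hab : Pinched C D a b n P)
    {s t : ℕ} (hns : n ≤ s) (htP : t ≤ P) :
    quotProd a b s t ≤ (D ^ ε) ^ (t - s) * (absProd b s t ^ (2 - ε) / absProd a s t) := by
  rw [quotProd_eq_prod, absProd, absProd, ← Nat.card_Ico,
    ← Real.finsetProd_rpow _ _ fun _ _ => norm_nonneg _, ← prod_div_distrib]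
  refine prod_le_pow_card_mul_prod (fun _ _ => by positivity) fun i hi => ?_
  obtain ⟨hsi, hit⟩ := mem_Ico.1 hi
  obtain ⟨ha, hb⟩ := hab.pos hC (hns.trans hsi) (hit.trans_le htP)
  rw [mul_div_assoc', div_le_div_iff_of_pos_right ha, ← Real.rpow_natCast]
  exact rpow_le_rpow_mul_rpow_sub hb (hab i (hns.trans hsi) (hit.trans_le htP)).2.2.2 hε _

lemma absProd_mul_quotProd_le (hC : 0 < C) (hD : 0 ≤ D) (hε : 0 ≤ ε)
    (hab : Pinched C D a b n P) (hB : ∀ s t, n ≤ s → s ≤ t → t ≤ P → maxTerm a b ε n s t ≤ B)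
    {s t : ℕ} (hns : n ≤ s) (hst : s ≤ t) (htP : t ≤ P) :
    absProd a n s * quotProd a b s t ≤ (D ^ ε) ^ (t - n) * B := by
  have hDε : 0 ≤ D ^ ε := Real.rpow_nonneg hD ε
  calc absProd a n s * quotProd a b s t
      ≤ ((D ^ ε) ^ (s - n) * absProd a n s ^ (1 - ε))
          * ((D ^ ε) ^ (t - s) * (absProd b s t ^ (2 - ε) / absProd a s t)) :=
        mul_le_mul (absProd_le_pow_mul_rpow hC hε hab (hst.trans htP))
          (quotProd_le_pow_mul_rpow hC hε hab hns htP) quotProd_nonneg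
          (mul_nonneg (pow_nonneg hDε _) (Real.rpow_nonneg absProd_nonneg _))
    _ = (D ^ ε) ^ (t - n) * maxTerm a b ε n s t := by
        rw [maxTerm, show t - n = (s - n) + (t - s) by omega, pow_add]
        ring
    _ ≤ (D ^ ε) ^ (t - n) * B := by gcongr; exact hB s t hns hst htP

lemma sq_absProd_mul_absProd_mul_quotProd {a b : ℕ → ℂ} {n t u v : ℕ}
    (hA : absProd a t u ≠ 0) (hnt : n ≤ t) (htu : t ≤ u) (huv : u ≤ v) :
    (absProd a n t * absProd b t u * quotProd a b u v) ^ 2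
      = (absProd a n t * quotProd a b t v) * (absProd a n u * quotProd a b u v) := by
  rw [← quotProd_mul_quotProd htu huv, ← absProd_mul_absProd hnt htu]
  unfold quotProd
  field_simp

lemma absProd_mul_absProd_mul_quotProd_le (hC : 0 < C) (hD : 0 ≤ D) (hε : 0 ≤ ε)
    (hab : Pinched C D a b n P) (hB : ∀ s t, n ≤ s → s ≤ t → t ≤ P → maxTerm a b ε n s t ≤ B)
    {t u v : ℕ} (hnt : n ≤ t) (htu : t ≤ u) (huv : u ≤ v) (hvP : v ≤ P) :
    absProd a n t * absProd b t u * quotProd a b u v ≤ (D ^ ε) ^ (v - n) * B := by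
  have hA : absProd a t u ≠ 0 := (prod_pos fun i hi => (hab.pos hC (hnt.trans (mem_Ico.1 hi).1)
    ((mem_Ico.1 hi).2.trans_le (huv.trans hvP))).1).ne'
  have hB0 : 0 ≤ B := (hB n n le_rfl le_rfl (by omega)).trans' (by simp [maxTerm])
  have hDε : 0 ≤ D ^ ε := Real.rpow_nonneg hD ε
  refine (pow_le_pow_iff_left₀ (mul_nonneg (mul_nonneg absProd_nonneg absProd_nonneg)
    quotProd_nonneg) (by positivity) two_ne_zero).1 ?_
  rw [sq_absProd_mul_absProd_mul_quotProd hA hnt htu huv, sq]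
  exact mul_le_mul (absProd_mul_quotProd_le hC hD hε hab hB hnt (htu.trans huv) hvP)
    (absProd_mul_quotProd_le hC hD hε hab hB (hnt.trans htu) huv hvP)
    (mul_nonneg absProd_nonneg quotProd_nonneg) (by positivity)

end PathBound

section Weights

variable (a b : ℕ → ℂ) (τ : ℕ → ℝ) (P : ℕ)

-- The weights a coefficient at `m` may carry when its recursion has multiplier `b²/a`, `b`, `a`.
def QuotWeight (m : ℕ) (W : ℝ) : Prop :=
  0 ≤ W ∧ ∀ v, m ≤ v → v ≤ P → W * quotProd a b m v ≤ τ v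

def MixedWeight (m : ℕ) (W : ℝ) : Prop :=
  0 ≤ W ∧ ∀ u v, m ≤ u → u ≤ v → v ≤ P → W * (absProd b m u * quotProd a b u v) ≤ τ v

def PathWeight (m : ℕ) (W : ℝ) : Prop :=
  0 ≤ W ∧ ∀ t u v, m ≤ t → t ≤ u → u ≤ v → v ≤ P →
    W * (absProd a m t * absProd b t u * quotProd a b u v) ≤ τ v

variable {a b τ P} {m : ℕ} {W c : ℝ}

lemma PathWeight.mixedWeight (h : PathWeight a b τ P m W) : MixedWeight a b τ P m W :=
  ⟨h.1, fun u v hmu huv hvP => by simpa using h.2 m u v le_rfl hmu huv hvP⟩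

lemma MixedWeight.quotWeight (h : MixedWeight a b τ P m W) : QuotWeight a b τ P m W :=
  ⟨h.1, fun v hmv hvP => by simpa using h.2 m v le_rfl hmv hvP⟩

lemma QuotWeight.le (h : QuotWeight a b τ P m W) (hmP : m ≤ P) : W ≤ τ m := by
  simpa using h.2 m le_rfl hmP

lemma QuotWeight.succ (h : QuotWeight a b τ P m W) (hc : 0 ≤ c)
    (hcq : c ≤ ‖b m‖ ^ 2 / ‖a m‖) : QuotWeight a b τ P (m + 1) (W * c) := by
  refine ⟨mul_nonneg h.1 hc, fun v hmv hvP => (h.2 v (by omega) hvP).trans' ?_⟩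
  rw [quotProd_eq_mul_succ (s := m) (by omega), mul_assoc]
  exact mul_le_mul_of_nonneg_left (mul_le_mul_of_nonneg_right hcq quotProd_nonneg) h.1

lemma MixedWeight.succ (h : MixedWeight a b τ P m W) (hc : 0 ≤ c) (hcb : c ≤ ‖b m‖) :
    MixedWeight a b τ P (m + 1) (W * c) := by
  refine ⟨mul_nonneg h.1 hc, fun u v hmu huv hvP => (h.2 u v (by omega) huv hvP).trans' ?_⟩
  rw [absProd_eq_mul_succ (s := m) (t := u) (by omega), mul_assoc, mul_assoc]
  exact mul_le_mul_of_nonneg_left (mul_le_mul_of_nonneg_right hcb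
    (mul_nonneg absProd_nonneg quotProd_nonneg)) h.1

lemma PathWeight.succ (h : PathWeight a b τ P m W) (hc : 0 ≤ c) (hca : c ≤ ‖a m‖) :
    PathWeight a b τ P (m + 1) (W * c) := by
  refine ⟨mul_nonneg h.1 hc, fun t u v hmt htu huv hvP =>
    (h.2 t u v (by omega) htu huv hvP).trans' ?_⟩
  rw [absProd_eq_mul_succ (s := m) (t := t) (by omega), mul_assoc, mul_assoc, mul_assoc,
    mul_assoc]
  exact mul_le_mul_of_nonneg_left (mul_le_mul_of_nonneg_right hca
    (mul_nonneg absProd_nonneg (mul_nonneg absProd_nonneg quotProd_nonneg))) h.1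

end Weights

lemma pathWeight_one {C D ε B : ℝ} {a b : ℕ → ℂ} {n P : ℕ} (hC : 0 < C) (hD : 0 ≤ D)
    (hε : 0 ≤ ε) (hab : Pinched C D a b n P)
    (hB : ∀ s t, n ≤ s → s ≤ t → t ≤ P → maxTerm a b ε n s t ≤ B) :
    PathWeight a b (fun v => (D ^ ε) ^ (v - n) * B) P n 1 :=
  ⟨zero_le_one, fun _ _ _ hnt htu huv hvP => by
    simpa using absProd_mul_absProd_mul_quotProd_le hC hD hε hab hB hnt htu huv hvP⟩

def WeightedBound (Adm : ℕ → ℝ → Prop) (u : ℕ → ℝ) (c μ L : ℝ) (n P : ℕ) : Prop :=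
  ∀ m W, n ≤ m → m ≤ P → Adm m W → W * u m ≤ c * μ ^ (m - n) * L

lemma weightedBound_of_le_mul_add {Adm : ℕ → ℝ → Prop} {u c e : ℕ → ℝ} {κ μ L : ℝ}
    {n P : ℕ} (hκ : 0 ≤ κ) (hμ0 : 0 ≤ μ) (hμ1 : μ < 1) (hL : 0 ≤ L)
    (hu : ∀ m, n ≤ m → m < P → u m ≤ c m * u (m + 1) + e m)
    (hW : ∀ m W, Adm m W → 0 ≤ W)
    (hstep : ∀ m W, n ≤ m → m < P → Adm m W → Adm (m + 1) (W * c m))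
    (he : ∀ m W, n ≤ m → m < P → Adm m W → W * e m ≤ κ * μ ^ (m - n) * L)
    (hP : ∀ W, Adm P W → W * u P ≤ μ ^ (P - n) * L) :
    WeightedBound Adm u (1 + κ * (1 - μ)⁻¹) μ L n P := by
  have hT : (1 - μ)⁻¹ * μ + 1 = (1 - μ)⁻¹ := by
    field_simp [(sub_pos.2 hμ1).ne']
    ring
  -- The forcing terms from `m` on sum to at most `κ μ^(m-n) L / (1 - μ)`.
  have key : ∀ d m W, m + d = P → n ≤ m → Adm m W →
      W * u m ≤ μ ^ (P - n) * L + κ * (1 - μ)⁻¹ * μ ^ (m - n) * L := by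
    intro d
    induction d with
    | zero =>
      rintro m W hmP - hAdm
      rw [add_zero] at hmP
      subst hmP
      have : 0 ≤ κ * (1 - μ)⁻¹ * μ ^ (m - n) * L :=
        mul_nonneg (mul_nonneg (mul_nonneg hκ (inv_nonneg.2 (by linarith))) (pow_nonneg hμ0 _)) hL
      linarith [hP W hAdm]
    | succ d ih =>
      intro m W hmd hnm hAdm
      have hmP : m < P := by omega
      calc W * u m ≤ W * c m * u (m + 1) + W * e m := by
            nlinarith [hu m hnm hmP, hW m W hAdm]
        _ ≤ (μ ^ (P - n) * L + κ * (1 - μ)⁻¹ * μ ^ (m + 1 - n) * L) + κ * μ ^ (m - n) * L :=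
            add_le_add (ih (m + 1) _ (by omega) (by omega) (hstep m W hnm hmP hAdm))
              (he m W hnm hmP hAdm)
        _ = μ ^ (P - n) * L + κ * ((1 - μ)⁻¹ * μ + 1) * μ ^ (m - n) * L := by
            rw [show m + 1 - n = m - n + 1 by omega, pow_succ]
            ring
        _ = μ ^ (P - n) * L + κ * (1 - μ)⁻¹ * μ ^ (m - n) * L := by rw [hT]
  intro m W hnm hmP hAdm
  have hμP : μ ^ (P - n) * L ≤ μ ^ (m - n) * L :=
    mul_le_mul_of_nonneg_right (pow_le_pow_of_le_one hμ0 hμ1.le (by omega)) hL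
  linarith [key (P - m) m W (by omega) hnm hAdm]

lemma WeightedBound.mul_succ_le {Adm : ℕ → ℝ → Prop} {u : ℕ → ℝ} {c μ L ρ W : ℝ} {n P m : ℕ}
    (h : WeightedBound Adm u c μ L n P) (hc : 0 ≤ c) (hμ0 : 0 ≤ μ) (hμ1 : μ ≤ 1)
    (hL : 0 ≤ L) (hρ : 0 < ρ) (hnm : n ≤ m) (hmP : m < P) (hAdm : Adm (m + 1) (W * ρ)) :
    W * u (m + 1) ≤ c / ρ * μ ^ (m - n) * L := by
  have h1 := h (m + 1) (W * ρ) (by omega) hmP hAdm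
  have h2 : μ ^ (m + 1 - n) ≤ μ ^ (m - n) := pow_le_pow_of_le_one hμ0 hμ1 (by omega)
  have h3 : W * u (m + 1) * ρ ≤ c * μ ^ (m - n) * L := by
    nlinarith [mul_le_mul_of_nonneg_left h2 (mul_nonneg hc hL)]
  rw [div_mul_eq_mul_div, div_mul_eq_mul_div, le_div_iff₀ hρ]
  linarith

lemma WeightedBound.le_base {Adm : ℕ → ℝ → Prop} {u : ℕ → ℝ} {c μ L : ℝ} {n P : ℕ}
    (h : WeightedBound Adm u c μ L n P) (hnP : n ≤ P) (hAdm : Adm n 1) : u n ≤ c * L := by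
  simpa using h n 1 le_rfl hnP hAdm

structure GeometricEnvelope (τ : ℕ → ℝ) (X μ L : ℝ) (n P : ℕ) : Prop where
  base_nonneg : 0 ≤ μ
  base_lt_one : μ < 1
  scale_nonneg : 0 ≤ L
  le : ∀ m, n ≤ m → m ≤ P → τ m ≤ μ ^ (m - n) * L
  terminal : τ P * X ≤ μ ^ (P - n) * L

section Levels

variable {a b : ℕ → ℂ} {τ : ℕ → ℝ} {X μ L K ρ c c' : ℝ} {n P : ℕ}

lemma QuotWeight.mul_le_envelope {m : ℕ} {W z Z : ℝ} (h : QuotWeight a b τ P m W)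
    (hE : GeometricEnvelope τ X μ L n P) (hnm : n ≤ m) (hmP : m ≤ P) (hz : z ≤ Z) (hZ : 0 ≤ Z) :
    W * z ≤ Z * μ ^ (m - n) * L :=
  calc W * z ≤ τ m * Z :=
        (mul_le_mul_of_nonneg_left hz h.1).trans (mul_le_mul_of_nonneg_right (h.le hmP) hZ)
    _ ≤ μ ^ (m - n) * L * Z := mul_le_mul_of_nonneg_right (hE.le m hnm hmP) hZ
    _ = Z * μ ^ (m - n) * L := by ring

lemma QuotWeight.mul_le_terminal {W z : ℝ} (h : QuotWeight a b τ P P W)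
    (hE : GeometricEnvelope τ X μ L n P) (hz0 : 0 ≤ z) (hz : z ≤ X) :
    W * z ≤ μ ^ (P - n) * L :=
  ((mul_le_mul_of_nonneg_left hz h.1).trans
    (mul_le_mul_of_nonneg_right (h.le le_rfl) (hz0.trans hz))).trans hE.terminal

lemma weightedBound_quotWeight {g x : ℕ → ℂ} (hE : GeometricEnvelope τ X μ L n P)
    (hg : ∀ m, n ≤ m → m < P → g m = b m ^ 2 / a m * g (m + 1) + x m)
    (hx : ∀ m, ‖x m‖ ≤ K) (hgP : ‖g P‖ ≤ X) :
    WeightedBound (QuotWeight a b τ P) (fun m => ‖g m‖) (1 + K * (1 - μ)⁻¹) μ L n P := by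
  have hK : 0 ≤ K := (norm_nonneg _).trans (hx 0)
  refine weightedBound_of_le_mul_add (c := fun m => ‖b m‖ ^ 2 / ‖a m‖) (e := fun m => ‖x m‖)
    hK hE.base_nonneg hE.base_lt_one hE.scale_nonneg (fun m hnm hmP => ?_) (fun _ _ h => h.1)
    (fun m _ _ _ h => h.succ (by positivity) le_rfl)
    (fun m _ hnm hmP h => h.mul_le_envelope hE hnm hmP.le (hx m) hK)
    (fun _ h => h.mul_le_terminal hE (norm_nonneg _) hgP)
  rw [hg m hnm hmP]
  exact (norm_add_le _ _).trans_eq (by rw [norm_mul, norm_div, norm_pow])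

lemma weightedBound_mixedWeight {g f r x : ℕ → ℂ} (hE : GeometricEnvelope τ X μ L n P)
    (hρ : 0 < ρ) (hρq : ∀ m, n ≤ m → m < P → ρ ≤ ‖b m‖ ^ 2 / ‖a m‖)
    (hf : WeightedBound (QuotWeight a b τ P) (fun m => ‖f m‖) c μ L n P) (hc : 0 ≤ c)
    (hg : ∀ m, n ≤ m → m < P → g m = b m * g (m + 1) + r m * f (m + 1) + x m)
    (hr : ∀ m, ‖r m‖ ≤ K) (hx : ∀ m, ‖x m‖ ≤ K) (hgP : ‖g P‖ ≤ X) :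
    WeightedBound (MixedWeight a b τ P) (fun m => ‖g m‖)
      (1 + K * (c / ρ + 1) * (1 - μ)⁻¹) μ L n P := by
  have hK : 0 ≤ K := (norm_nonneg _).trans (hx 0)
  refine weightedBound_of_le_mul_add (c := fun m => ‖b m‖)
    (e := fun m => K * ‖f (m + 1)‖ + K) (by positivity) hE.base_nonneg hE.base_lt_one
    hE.scale_nonneg
    (fun m hnm hmP => ?_) (fun _ _ h => h.1) (fun m _ _ _ h => h.succ (norm_nonneg _) le_rfl)
    (fun m W hnm hmP h => ?_)
    (fun _ h => h.quotWeight.mul_le_terminal hE (norm_nonneg _) hgP)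
  · rw [hg m hnm hmP]
    have := norm_mul_le_of_le (hr m) (le_refl ‖f (m + 1)‖)
    linarith [norm_add₃_le (a := b m * g (m + 1)) (b := r m * f (m + 1)) (c := x m),
      norm_mul (b m) (g (m + 1)), hx m]
  · have hf' := hf.mul_succ_le hc hE.base_nonneg hE.base_lt_one.le hE.scale_nonneg hρ hnm hmP
      (h.quotWeight.succ hρ.le (hρq m hnm hmP))
    have h1 := h.quotWeight.mul_le_envelope hE hnm hmP.le (le_refl K) hK
    linear_combination K * hf' + h1

lemma weightedBound_pathWeight {g f h h' r r' r'' x : ℕ → ℂ} (hE : GeometricEnvelope τ X μ L n P)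
    (hρ : 0 < ρ) (hρq : ∀ m, n ≤ m → m < P → ρ ≤ ‖b m‖ ^ 2 / ‖a m‖)
    (hρb : ∀ m, n ≤ m → m < P → ρ ≤ ‖b m‖)
    (hf : WeightedBound (QuotWeight a b τ P) (fun m => ‖f m‖) c μ L n P) (hc : 0 ≤ c)
    (hh : WeightedBound (MixedWeight a b τ P) (fun m => ‖h m‖) c' μ L n P)
    (hh' : WeightedBound (MixedWeight a b τ P) (fun m => ‖h' m‖) c' μ L n P) (hc' : 0 ≤ c')
    (hg : ∀ m, n ≤ m → m < P → g m = a m * g (m + 1) + r m * f (m + 1) + r' m * h (m + 1)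
      + r'' m * h' (m + 1) + x m)
    (hr : ∀ m, ‖r m‖ ≤ K) (hr' : ∀ m, ‖r' m‖ ≤ K) (hr'' : ∀ m, ‖r'' m‖ ≤ K)
    (hx : ∀ m, ‖x m‖ ≤ K) (hgP : ‖g P‖ ≤ X) :
    WeightedBound (PathWeight a b τ P) (fun m => ‖g m‖)
      (1 + K * (c / ρ + 2 * (c' / ρ) + 1) * (1 - μ)⁻¹) μ L n P := by
  have hK : 0 ≤ K := (norm_nonneg _).trans (hx 0)
  refine weightedBound_of_le_mul_add (c := fun m => ‖a m‖)
    (e := fun m => K * ‖f (m + 1)‖ + K * ‖h (m + 1)‖ + K * ‖h' (m + 1)‖ + K) (by positivity)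
    hE.base_nonneg hE.base_lt_one hE.scale_nonneg (fun m hnm hmP => ?_) (fun _ _ h => h.1)
    (fun m _ _ _ h => h.succ (norm_nonneg _) le_rfl) (fun m W hnm hmP hW => ?_)
    (fun _ h => h.mixedWeight.quotWeight.mul_le_terminal hE (norm_nonneg _) hgP)
  · rw [hg m hnm hmP]
    have := norm_mul_le_of_le (hr m) (le_refl ‖f (m + 1)‖)
    have := norm_mul_le_of_le (hr' m) (le_refl ‖h (m + 1)‖)
    have := norm_mul_le_of_le (hr'' m) (le_refl ‖h' (m + 1)‖)
    linarith [norm_add_le (a m * g (m + 1) + r m * f (m + 1) + r' m * h (m + 1)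
        + r'' m * h' (m + 1)) (x m),
      norm_add₄_le (a := a m * g (m + 1)) (b := r m * f (m + 1)) (c := r' m * h (m + 1))
        (d := r'' m * h' (m + 1)),
      norm_mul (a m) (g (m + 1)), hx m]
  · have hWm := hW.mixedWeight
    have hf' := hf.mul_succ_le hc hE.base_nonneg hE.base_lt_one.le hE.scale_nonneg hρ hnm hmP
      (hWm.quotWeight.succ hρ.le (hρq m hnm hmP))
    have hh1 := hh.mul_succ_le hc' hE.base_nonneg hE.base_lt_one.le hE.scale_nonneg hρ hnm hmP
      (hWm.succ hρ.le (hρb m hnm hmP))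
    have hh2 := hh'.mul_succ_le hc' hE.base_nonneg hE.base_lt_one.le hE.scale_nonneg hρ hnm hmP
      (hWm.succ hρ.le (hρb m hnm hmP))
    have h1 := hWm.quotWeight.mul_le_envelope hE hnm hmP.le (le_refl K) hK
    linear_combination K * hf' + K * hh1 + K * hh2 + h1

end Levels

lemma geometricEnvelope_of_le_sq {θ μ B X : ℝ} {n P : ℕ} (hθ0 : 0 ≤ θ) (hθ : θ ≤ μ ^ 2)
    (hμ0 : 0 ≤ μ) (hμ1 : μ < 1) (hB : 0 ≤ B) (hX : 0 ≤ X) :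
    GeometricEnvelope (fun v => θ ^ (v - n) * B) X μ (B * (X * μ ^ (P - n) + 1)) n P := by
  have hpow : ∀ k, θ ^ k ≤ μ ^ k * μ ^ k := fun k =>
    (pow_le_pow_left₀ hθ0 hθ k).trans_eq (by rw [← pow_mul, ← pow_add, two_mul])
  refine ⟨hμ0, hμ1, by positivity, fun m _ _ => ?_, ?_⟩
  · have h1 : μ ^ (m - n) ≤ 1 := pow_le_one₀ hμ0 hμ1.le
    have h2 : 0 ≤ X * μ ^ (P - n) := by positivity
    calc θ ^ (m - n) * B ≤ μ ^ (m - n) * μ ^ (m - n) * B :=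
          mul_le_mul_of_nonneg_right (hpow _) hB
      _ ≤ μ ^ (m - n) * (B * (X * μ ^ (P - n) + 1)) := by
          rw [mul_assoc]
          exact mul_le_mul_of_nonneg_left (by nlinarith) (pow_nonneg hμ0 _)
  · calc θ ^ (P - n) * B * X ≤ μ ^ (P - n) * μ ^ (P - n) * B * X := by gcongr; exact hpow _
      _ ≤ μ ^ (P - n) * (B * (X * μ ^ (P - n) + 1)) := by
          nlinarith [mul_nonneg (pow_nonneg hμ0 (P - n)) hB]

lemma mul_mul_add_one_le {c B X δ M : ℝ} (hc : 0 ≤ c) (hB : 0 ≤ B) (hX : 0 ≤ X)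
    (hXδ : X * δ = 1) : c * (B * (X * M + 1)) ≤ 2 * c * X * B * max δ M := by
  have h : B * (X * M + 1) ≤ 2 * X * B * max δ M := by
    rw [← hXδ]
    nlinarith [le_max_left δ M, le_max_right δ M, mul_nonneg hX hB]
  nlinarith

def systemConst (K ρ T : ℝ) : ℝ :=
  let c₁ := 1 + K * T
  let c₂ := 1 + K * (c₁ / ρ + 1) * T
  1 + K * (c₁ / ρ + 2 * (c₂ / ρ) + 1) * T

lemma one_le_le_le_systemConst {K ρ T : ℝ} (hK : 0 ≤ K) (hρ : 0 < ρ) (hT : 0 ≤ T) :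
    1 ≤ 1 + K * T ∧ 1 + K * T ≤ 1 + K * ((1 + K * T) / ρ + 1) * T ∧
      1 + K * ((1 + K * T) / ρ + 1) * T ≤ systemConst K ρ T := by
  have h₀ : 0 ≤ K * T := by positivity
  have h₁ : 0 ≤ K * ((1 + K * T) / ρ) * T := by positivity
  have h₂ : 0 ≤ K * (2 * ((1 + K * ((1 + K * T) / ρ + 1) * T) / ρ)) * T := by positivity
  refine ⟨by linarith, by linarith, ?_⟩
  simp only [systemConst]
  linarith

lemma quadratic_system_le
    {a b α02 α11 α20 β02 β11 x02 r11 x11 r20a r20b x20 s02 y02 s11a s11b s11c y11 : ℕ → ℂ}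
    {τ : ℕ → ℝ} {X μ L K ρ : ℝ} {n P : ℕ} (hE : GeometricEnvelope τ X μ L n P)
    (hW : PathWeight a b τ P n 1) (hnP : n ≤ P) (hρ : 0 < ρ)
    (hρq : ∀ m, n ≤ m → m < P → ρ ≤ ‖b m‖ ^ 2 / ‖a m‖) (hρb : ∀ m, n ≤ m → m < P → ρ ≤ ‖b m‖)
    (hrec : ∀ m, n ≤ m → m < P →
      α02 m = b m ^ 2 / a m * α02 (m + 1) + x02 m ∧
      α11 m = b m * α11 (m + 1) + r11 m * α02 (m + 1) + x11 m ∧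
      α20 m = a m * α20 (m + 1) + r20a m * α02 (m + 1) + r20b m * α11 (m + 1) + x20 m ∧
      β02 m = b m * β02 (m + 1) + s02 m * α02 (m + 1) + y02 m ∧
      β11 m = a m * β11 (m + 1) + s11a m * α02 (m + 1) + s11b m * α11 (m + 1)
        + s11c m * β02 (m + 1) + y11 m)
    (hcoef : ∀ m, ‖x02 m‖ ≤ K ∧ ‖r11 m‖ ≤ K ∧ ‖x11 m‖ ≤ K ∧ ‖r20a m‖ ≤ K ∧ ‖r20b m‖ ≤ K ∧
      ‖x20 m‖ ≤ K ∧ ‖s02 m‖ ≤ K ∧ ‖y02 m‖ ≤ K ∧ ‖s11a m‖ ≤ K ∧ ‖s11b m‖ ≤ K ∧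
      ‖s11c m‖ ≤ K ∧ ‖y11 m‖ ≤ K)
    (h02 : ‖α02 P‖ ≤ X) (h11 : ‖α11 P‖ ≤ X) (h20 : ‖α20 P‖ ≤ X) (hb02 : ‖β02 P‖ ≤ X)
    (hb11 : ‖β11 P‖ ≤ X) :
    let c := systemConst K ρ (1 - μ)⁻¹
    ‖α02 n‖ ≤ c * L ∧ ‖α11 n‖ ≤ c * L ∧ ‖α20 n‖ ≤ c * L ∧ ‖β02 n‖ ≤ c * L ∧
      ‖β11 n‖ ≤ c * L := by
  simp only [imp_and, forall_and] at hrec hcoef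
  obtain ⟨g02, g11, g20, gb02, gb11⟩ := hrec
  obtain ⟨hx02, hr11, hx11, hr20a, hr20b, hx20, hs02, hy02, hs11a, hs11b, hs11c, hy11⟩ := hcoef
  have hK : 0 ≤ K := (norm_nonneg _).trans (hx02 0)
  have hT : 0 ≤ (1 - μ)⁻¹ := inv_nonneg.2 (sub_nonneg.2 hE.base_lt_one.le)
  obtain ⟨-, hc₁₂, hc₂₃⟩ := one_le_le_le_systemConst hK hρ hT
  have e02 := weightedBound_quotWeight hE g02 hx02 h02
  have e11 := weightedBound_mixedWeight hE hρ hρq e02 (by positivity) g11 hr11 hx11 h11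
  have eb02 := weightedBound_mixedWeight hE hρ hρq e02 (by positivity) gb02 hs02 hy02 hb02
  have e20 := weightedBound_pathWeight (r'' := 0) hE hρ hρq hρb e02 (by positivity) e11 e11
    (by positivity) (fun m h h' => by simp [g20 m h h']) hr20a hr20b
    (fun _ => by simpa using hK) hx20 h20
  have eb11 := weightedBound_pathWeight hE hρ hρq hρb e02 (by positivity) e11 eb02
    (by positivity) gb11 hs11a hs11b hs11c hy11 hb11
  have hL := hE.scale_nonneg
  exact ⟨(e02.le_base hnP hW.mixedWeight.quotWeight).trans (by gcongr; exact hc₁₂.trans hc₂₃),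
    (e11.le_base hnP hW.mixedWeight).trans (by gcongr),
    e20.le_base hnP hW, (eb02.le_base hnP hW.mixedWeight).trans (by gcongr),
    eb11.le_base hnP hW⟩

theorem quadratic_coefficient_estimate_general
    (C D k ε : ℝ)
    (hC : 0 < C) (hCD : C < D) (hD : D < 1)
    (hε : 0 < ε ∧ ε < min (min ((11 - 5 * k) / 4) ((5 - 2 * k) / 3)) ((3 - k) / 2)) :
    ∃ Y : ℝ, 0 < Y ∧ ∀ δ : ℝ, 0 < δ → ∃ X : ℝ, 0 < X ∧
      ∀ (p P : ℕ) (a b : ℕ → ℂ)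
        (α02 α11 α20 β02 β11 : ℕ → ℂ)
        (x02 r11 x11 r20a r20b x20 s02 y02 s11a s11b s11c y11 : ℕ → ℂ),
        p < P →
        (∀ n, p ≤ n → n < P →
          C ≤ ‖a n‖ ∧ ‖a n‖ ≤ D ∧
          C ≤ ‖b n‖ ∧ ‖b n‖ ≤ D) →
        -- the backward recursions
        (∀ n, p ≤ n → n < P →
          α02 n = b n ^ 2 / a n * α02 (n + 1) + x02 n ∧
          α11 n = b n * α11 (n + 1) + r11 n * α02 (n + 1) + x11 n ∧
          α20 n = a n * α20 (n + 1) + r20a n * α02 (n + 1) + r20b n * α11 (n + 1)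
            + x20 n ∧
          β02 n = b n * β02 (n + 1) + s02 n * α02 (n + 1) + y02 n ∧
          β11 n = a n * β11 (n + 1) + s11a n * α02 (n + 1) + s11b n * α11 (n + 1)
            + s11c n * β02 (n + 1) + y11 n) →
        -- all coefficients of the linear parts and the constants bounded by 4D²/C²
        (∀ n, ‖x02 n‖ ≤ 4 * D ^ 2 / C ^ 2 ∧
          ‖r11 n‖ ≤ 4 * D ^ 2 / C ^ 2 ∧
          ‖x11 n‖ ≤ 4 * D ^ 2 / C ^ 2 ∧
          ‖r20a n‖ ≤ 4 * D ^ 2 / C ^ 2 ∧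
          ‖r20b n‖ ≤ 4 * D ^ 2 / C ^ 2 ∧
          ‖x20 n‖ ≤ 4 * D ^ 2 / C ^ 2 ∧
          ‖s02 n‖ ≤ 4 * D ^ 2 / C ^ 2 ∧
          ‖y02 n‖ ≤ 4 * D ^ 2 / C ^ 2 ∧
          ‖s11a n‖ ≤ 4 * D ^ 2 / C ^ 2 ∧
          ‖s11b n‖ ≤ 4 * D ^ 2 / C ^ 2 ∧
          ‖s11c n‖ ≤ 4 * D ^ 2 / C ^ 2 ∧
          ‖y11 n‖ ≤ 4 * D ^ 2 / C ^ 2) →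
        -- terminal values bounded by X
        ‖α02 P‖ ≤ X → ‖α11 P‖ ≤ X →
        ‖α20 P‖ ≤ X → ‖β02 P‖ ≤ X →
        ‖β11 P‖ ≤ X →
        -- conclusion
        ∀ n, p ≤ n → n ≤ P →
          ∀ B : ℝ, (∀ s t, n ≤ s → s ≤ t → t ≤ P → maxTerm a b ε n s t ≤ B) →
            ‖α02 n‖
                ≤ Y * X * B * max δ (D ^ (ε * ((P : ℝ) - (n : ℝ)) / 2)) ∧
            ‖α11 n‖
                ≤ Y * X * B * max δ (D ^ (ε * ((P : ℝ) - (n : ℝ)) / 2)) ∧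
            ‖α20 n‖
                ≤ Y * X * B * max δ (D ^ (ε * ((P : ℝ) - (n : ℝ)) / 2)) ∧
            ‖β02 n‖
                ≤ Y * X * B * max δ (D ^ (ε * ((P : ℝ) - (n : ℝ)) / 2)) ∧
            ‖β11 n‖
                ≤ Y * X * B * max δ (D ^ (ε * ((P : ℝ) - (n : ℝ)) / 2)) := by
  obtain ⟨hε0, -⟩ := hε
  have hD0 : 0 < D := hC.trans hCD
  set μ := D ^ (ε / 2)
  have hμ0 : 0 ≤ μ := Real.rpow_nonneg hD0.le _
  have hμ1 : μ < 1 := Real.rpow_lt_one hD0.le hD (half_pos hε0)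
  set c := systemConst (4 * D ^ 2 / C ^ 2) (C ^ 2 / D) (1 - μ)⁻¹
  have hc : 1 ≤ c := by
    obtain ⟨h₀, h₁, h₂⟩ := one_le_le_le_systemConst (K := 4 * D ^ 2 / C ^ 2) (ρ := C ^ 2 / D)
      (by positivity) (by positivity) (inv_nonneg.2 (sub_nonneg.2 hμ1.le))
    exact h₀.trans (h₁.trans h₂)
  refine ⟨2 * c, by positivity, fun δ hδ => ⟨δ⁻¹, inv_pos.2 hδ, ?_⟩⟩
  intro p P a b α02 α11 α20 β02 β11 x02 r11 x11 r20a r20b x20 s02 y02 s11a s11b s11c y11 _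
    hab hrec hcoef h02 h11 h20 hb02 hb11 n hpn hnP B hB
  have hab' : Pinched C D a b n P := fun i hi hiP => hab i (hpn.trans hi) hiP
  have hB0 : 0 ≤ B := (hB n n le_rfl le_rfl hnP).trans' (by simp [maxTerm])
  have hθ : D ^ ε ≤ μ ^ 2 := by rw [← Real.rpow_natCast, ← Real.rpow_mul hD0.le]; norm_num
  have hμP : μ ^ (P - n) = D ^ (ε * ((P : ℝ) - (n : ℝ)) / 2) := by
    rw [← Real.rpow_natCast, ← Real.rpow_mul hD0.le, Nat.cast_sub hnP]
    ring_nf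
  obtain ⟨e02, e11, e20, eb02, eb11⟩ := quadratic_system_le
    (geometricEnvelope_of_le_sq (Real.rpow_nonneg hD0.le ε) hθ hμ0 hμ1 hB0 (inv_nonneg.2 hδ.le))
    (pathWeight_one hC hD0.le hε0.le hab' hB) hnP (by positivity) (hab'.sq_div_le_sq_div hC)
    (hab'.sq_div_le_norm hC) (fun m h h' => hrec m (hpn.trans h) h') hcoef h02 h11 h20 hb02 hb11
  have hfin := mul_mul_add_one_le (M := μ ^ (P - n)) (zero_le_one.trans hc) hB0
    (inv_nonneg.2 hδ.le) (inv_mul_cancel₀ hδ.ne')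
  rw [← hμP]
  exact ⟨e02.trans hfin, e11.trans hfin, e20.trans hfin, eb02.trans hfin, eb11.trans hfin⟩

/-- Estimate on the quadratic coefficients of the conjugating maps: there is a constant
`Y = Y(C,D,ε)` and, for every `δ > 0`, a constant `X = X(C,D,ε,δ)`, such that whenever
the five terminal coefficients at `n = P` are bounded by `X`, all five coefficients
satisfy, for `n ∈ [p,P]`, the bound
`Y·X·max_{n≤s≤t≤P}{(|b_{t,s}|^{2-ε}/|a_{t,s}|)|a_{s,n}|^{1-ε}}·max{δ, D^{ε(P-n)/2}}`. -/
theorem quadratic_coefficient_estimate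
    (C D k ε : ℝ)
    (hC : 0 < C) (hCD : C < D) (hD : D < 1)
    (hk2 : 2 < k) (hk : k < 11 / 5) (hDk : D ^ k < C)
    (hε : 0 < ε ∧ ε < min (min ((11 - 5 * k) / 4) ((5 - 2 * k) / 3)) ((3 - k) / 2)) :
    ∃ Y : ℝ, 0 < Y ∧ ∀ δ : ℝ, 0 < δ → ∃ X : ℝ, 0 < X ∧
      ∀ (p P : ℕ) (a b : ℕ → ℂ)
        (α02 α11 α20 β02 β11 : ℕ → ℂ)
        (x02 r11 x11 r20a r20b x20 s02 y02 s11a s11b s11c y11 : ℕ → ℂ),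
        p < P →
        (∀ n, p ≤ n → n < P →
          C ≤ ‖a n‖ ∧ ‖a n‖ ≤ D ∧
          C ≤ ‖b n‖ ∧ ‖b n‖ ≤ D) →
        -- the backward recursions
        (∀ n, p ≤ n → n < P →
          α02 n = b n ^ 2 / a n * α02 (n + 1) + x02 n ∧
          α11 n = b n * α11 (n + 1) + r11 n * α02 (n + 1) + x11 n ∧
          α20 n = a n * α20 (n + 1) + r20a n * α02 (n + 1) + r20b n * α11 (n + 1)
            + x20 n ∧
          β02 n = b n * β02 (n + 1) + s02 n * α02 (n + 1) + y02 n ∧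
          β11 n = a n * β11 (n + 1) + s11a n * α02 (n + 1) + s11b n * α11 (n + 1)
            + s11c n * β02 (n + 1) + y11 n) →
        -- all coefficients of the linear parts and the constants bounded by 4D²/C²
        (∀ n, ‖x02 n‖ ≤ 4 * D ^ 2 / C ^ 2 ∧
          ‖r11 n‖ ≤ 4 * D ^ 2 / C ^ 2 ∧
          ‖x11 n‖ ≤ 4 * D ^ 2 / C ^ 2 ∧
          ‖r20a n‖ ≤ 4 * D ^ 2 / C ^ 2 ∧
          ‖r20b n‖ ≤ 4 * D ^ 2 / C ^ 2 ∧
          ‖x20 n‖ ≤ 4 * D ^ 2 / C ^ 2 ∧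
          ‖s02 n‖ ≤ 4 * D ^ 2 / C ^ 2 ∧
          ‖y02 n‖ ≤ 4 * D ^ 2 / C ^ 2 ∧
          ‖s11a n‖ ≤ 4 * D ^ 2 / C ^ 2 ∧
          ‖s11b n‖ ≤ 4 * D ^ 2 / C ^ 2 ∧
          ‖s11c n‖ ≤ 4 * D ^ 2 / C ^ 2 ∧
          ‖y11 n‖ ≤ 4 * D ^ 2 / C ^ 2) →
        -- terminal values bounded by X
        ‖α02 P‖ ≤ X → ‖α11 P‖ ≤ X →
        ‖α20 P‖ ≤ X → ‖β02 P‖ ≤ X →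
        ‖β11 P‖ ≤ X →
        -- conclusion
        ∀ n, p ≤ n → n ≤ P →
          ∀ B : ℝ, (∀ s t, n ≤ s → s ≤ t → t ≤ P → maxTerm a b ε n s t ≤ B) →
            ‖α02 n‖
                ≤ Y * X * B * max δ (D ^ (ε * ((P : ℝ) - (n : ℝ)) / 2)) ∧
            ‖α11 n‖
                ≤ Y * X * B * max δ (D ^ (ε * ((P : ℝ) - (n : ℝ)) / 2)) ∧
            ‖α20 n‖
                ≤ Y * X * B * max δ (D ^ (ε * ((P : ℝ) - (n : ℝ)) / 2)) ∧
            ‖β02 n‖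
                ≤ Y * X * B * max δ (D ^ (ε * ((P : ℝ) - (n : ℝ)) / 2)) ∧
            ‖β11 n‖
                ≤ Y * X * B * max δ (D ^ (ε * ((P : ℝ) - (n : ℝ)) / 2)) :=
  quadratic_coefficient_estimate_general C D k ε hC hCD hD hε
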